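/- arXiv:1102.2478 — 4 statements merged into one kernel-verified Lean document; each statement's English description precedes it below -/
import Mathlib

section
/- A nonzero polynomial in one variable over a field of characteristic 0 that has exactly l nonzero monomials cannot have a root of multiplicity at least l at any nonzero point. -/
/-!
Let `θ = X · d/dX`. The operator `θ - e` multiplies the coefficient of `X ^ n` by `n - e`, so for
`e` in the support of `P` it deletes exactly one monomial, while it lowers the multiplicity of any
root by at most one. Applying it `l - 1` times to a polynomial with `l` monomials and a root `a` of
multiplicity `≥ l` leaves a monomial vanishing at `a`, which forces `a = 0`.
-/

open Polynomial

namespace Polynomial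

section CommRing

variable {R : Type*} [CommRing R]

noncomputable def eulerSub (e : ℕ) (P : R[X]) : R[X] :=
  X * derivative P - C (e : R) * P

theorem coeff_eulerSub (e : ℕ) (P : R[X]) (n : ℕ) :
    (eulerSub e P).coeff n = ((n : R) - e) * P.coeff n := by
  rcases n with _ | n
  · simp [eulerSub]
  · simp only [eulerSub, coeff_sub, coeff_X_mul, coeff_derivative, coeff_C_mul]
    push_cast
    ring

theorem pow_dvd_eulerSub {a : R} {l : ℕ} {P : R[X]} (h : (X - C a) ^ (l + 1) ∣ P) (e : ℕ) :
    (X - C a) ^ l ∣ eulerSub e P := by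
  have hP : (X - C a) ^ l ∣ P := (pow_dvd_pow _ l.le_succ).trans h
  have hP' : (X - C a) ^ l ∣ derivative P := by
    simpa using pow_sub_one_dvd_derivative_of_pow_dvd h
  exact dvd_sub (dvd_mul_of_dvd_right hP' _) (dvd_mul_of_dvd_right hP _)

theorem support_eulerSub [IsDomain R] [CharZero R] (e : ℕ) (P : R[X]) :
    (eulerSub e P).support = P.support.erase e := by
  ext n
  simp [mem_support_iff, coeff_eulerSub, sub_eq_zero]

end CommRing

theorem not_pow_dvd_of_card_support_eq {k : Type*} [Field k] [CharZero k] {a : k} (ha : a ≠ 0)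
    {l : ℕ} {P : k[X]} (hl : P.support.card = l + 1) : ¬ (X - C a) ^ (l + 1) ∣ P := by
  induction l generalizing P with
  | zero =>
    obtain ⟨m, c, hc, rfl⟩ := card_support_eq_one.mp hl
    rw [pow_one, dvd_iff_isRoot]
    simp [hc, ha]
  | succ l ih =>
    obtain ⟨e, he⟩ : P.support.Nonempty := Finset.card_pos.mp (by omega)
    have hcard : (eulerSub e P).support.card = l + 1 := by
      rw [support_eulerSub, Finset.card_erase_of_mem he, hl, Nat.add_sub_cancel]
    exact fun h ↦ ih hcard (pow_dvd_eulerSub h e)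

end Polynomial

/-- A nonzero polynomial in one variable over a field of characteristic 0 with
exactly `l` nonzero monomials cannot have a root of multiplicity at least `l`
at any nonzero point. -/
theorem stmt_0 {k : Type*} [Field k] [CharZero k] (P : Polynomial k) (hP : P ≠ 0)
    (l : ℕ) (hl : P.support.card = l) (a : k) (ha : a ≠ 0) :
    ¬ (X - C a) ^ l ∣ P := by
  rcases l with _ | l
  · exact absurd (card_support_eq_zero.mp hl) hP
  · exact not_pow_dvd_of_card_support_eq ha hl
end

section
/- A trinomial polynomial a·z^p + b·z^q + c·z^r over a field of characteristic 0, with a, b, c nonzero and p, q, r pairwise distinct, has no root of multiplicity at least 3 at any nonzero point. -/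
/-!
With `θ = X • d/dX` we have `θ (X ^ n) = n • X ^ n`, so a triple root `z` of
`f = u X^k + v X^m + w X^n` is a common zero of `f`, `θ f` and `θ² f`. Evaluating at `z` gives a
Vandermonde system in `u z^k, v z^m, w z^n`, and the combination `(θ - m)(θ - n) f` isolates
`(k - m)(k - n) u z^k = 0`.
-/

open Polynomial

namespace Polynomial

section CommSemiring

variable {R : Type*} [CommSemiring R]

theorem X_mul_derivative_C_mul_X_pow (a : R) (n : ℕ) :
    X * derivative (C a * X ^ n) = C (a * n) * X ^ n := by
  cases n with
  | zero => simp
  | succ n =>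
    rw [derivative_C_mul_X_pow, C_mul, Nat.add_sub_cancel, pow_succ]
    ring

theorem X_mul_derivative_trinomial (k m n : ℕ) (u v w : R) :
    X * derivative (trinomial k m n u v w) = trinomial k m n (u * k) (v * m) (w * n) := by
  simp only [trinomial_def, derivative_add, mul_add, X_mul_derivative_C_mul_X_pow]

theorem pow_dvd_X_mul_derivative_of_pow_succ_dvd {p q : R[X]} {n : ℕ} (h : q ^ (n + 1) ∣ p) :
    q ^ n ∣ X * derivative p :=
  (pow_sub_one_dvd_derivative_of_pow_dvd h).mul_left X

end CommSemiring

theorem eq_zero_of_X_sub_C_pow_three_dvd_trinomial {R : Type*} [CommRing R] [IsDomain R]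
    {k m n : ℕ} {u v w z : R} (hkm : (k : R) ≠ m) (hkn : (k : R) ≠ n) (hz : z ≠ 0)
    (h : (X - C z) ^ 3 ∣ trinomial k m n u v w) : u = 0 := by
  have h₁ := pow_dvd_X_mul_derivative_of_pow_succ_dvd h
  rw [X_mul_derivative_trinomial] at h₁
  have h₂ := pow_dvd_X_mul_derivative_of_pow_succ_dvd h₁
  rw [X_mul_derivative_trinomial] at h₂
  have e₀ := dvd_iff_isRoot.mp (dvd_trans (dvd_pow_self _ three_ne_zero) h)
  have e₁ := dvd_iff_isRoot.mp (dvd_trans (dvd_pow_self _ two_ne_zero) h₁)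
  have e₂ := dvd_iff_isRoot.mp (by simpa using h₂)
  simp only [IsRoot, trinomial_def, eval_add, eval_mul, eval_C, eval_pow, eval_X] at e₀ e₁ e₂
  have key : ((k : R) - m) * ((k : R) - n) * (u * z ^ k) = 0 := by
    linear_combination ((m : R) * n) * e₀ - ((m : R) + n) * e₁ + e₂
  simpa [sub_ne_zero.mpr hkm, sub_ne_zero.mpr hkn, hz] using key

end Polynomial

theorem stmt_3_general {k : Type*} [Field k] [CharZero k] (a b c : k)
    (ha : a ≠ 0)
    (p q r : ℕ) (hpq : p ≠ q) (hpr : p ≠ r)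
    (z : k) (hz : z ≠ 0) :
    ¬ (X - C z) ^ 3 ∣ (C a * X ^ p + C b * X ^ q + C c * X ^ r) := by
  rw [← trinomial_def]
  exact fun h ↦ ha <| eq_zero_of_X_sub_C_pow_three_dvd_trinomial
    (Nat.cast_injective.ne hpq) (Nat.cast_injective.ne hpr) hz h

/-- A trinomial `a·z^p + b·z^q + c·z^r` (with `a, b, c ≠ 0` and `p, q, r`
pairwise distinct) over a field of characteristic 0 has no root of
multiplicity at least 3 at a nonzero point. -/
theorem stmt_3 {k : Type*} [Field k] [CharZero k] (a b c : k)
    (ha : a ≠ 0) (hb : b ≠ 0) (hc : c ≠ 0)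
    (p q r : ℕ) (hpq : p ≠ q) (hpr : p ≠ r) (hqr : q ≠ r)
    (z : k) (hz : z ≠ 0) :
    ¬ (X - C z) ^ 3 ∣ (C a * X ^ p + C b * X ^ q + C c * X ^ r) :=
  stmt_3_general a b c ha p q r hpq hpr z hz
end

section
/- If z ∈ (K*)^n is a root of P(z) = Σ a_i z^i, then the maximum max_i (val(a_i) + ⟨Val(z), i⟩) is attained for at least two distinct multi-indices i; i.e., Val(z) lies in the tropical hypersurface of the tropicalization of P. -/
/-!
If a single monomial `a_i z^i` had strictly the largest valuation, the ultrametric inequality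
would make it the valuation of the whole sum, which is `val 0 = ⊥`. Then no other monomial can
occur at all, and `P(z) = a_i z^i ≠ 0`.
-/

section Multiplicative

variable {M Γ : Type*} [CommMonoid M] [AddCommMonoid Γ] (v : M → Γ)
  (hmul : ∀ a b : M, v (a * b) = v a + v b)
include hmul

theorem apply_mul_pow (c x : M) (m : ℕ) : v (c * x ^ m) = v c + m • v x := by
  induction m with
  | zero => simp
  | succ m ih => rw [pow_succ, ← mul_assoc, hmul, ih, succ_nsmul, add_assoc]

theorem apply_mul_prod_pow {ι : Type*} (t : Finset ι) (x : ι → M) (e : ι → ℕ) (c : M) :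
    v (c * ∏ j ∈ t, x j ^ e j) = v c + ∑ j ∈ t, e j • v (x j) := by
  induction t using Finset.cons_induction generalizing c with
  | empty => simp
  | cons k t hk ih =>
    rw [Finset.prod_cons, Finset.sum_cons, ← mul_assoc, ih, apply_mul_pow v hmul, add_assoc]

end Multiplicative

section Ultrametric

variable {M Γ ι : Type*} [AddCommMonoid M] [LinearOrder Γ] [OrderBot Γ] (v : M → Γ)
  (h0 : v 0 = ⊥) (hadd : ∀ a b : M, v (a + b) ≤ max (v a) (v b))
  (hne : ∀ a b : M, v a ≠ v b → v (a + b) = max (v a) (v b))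
include h0 hadd hne

theorem apply_sum_eq_of_forall_lt {s : Finset ι} {f : ι → M} {i₀ : ι} (hi₀ : i₀ ∈ s)
    (hlt : ∀ i ∈ s, i ≠ i₀ → v (f i) < v (f i₀)) : v (∑ i ∈ s, f i) = v (f i₀) := by
  classical
  by_cases hbot : v (f i₀) = ⊥
  · rw [Finset.sum_eq_single_of_mem i₀ hi₀ fun i hi hi' => absurd (hlt i hi hi') (by simp [hbot])]
  have hrest : v (∑ i ∈ s.erase i₀, f i) < v (f i₀) :=
    Finset.sum_induction _ (fun x => v x < v (f i₀))
      (fun x y hx hy => (hadd x y).trans_lt (max_lt hx hy))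
      (h0 ▸ bot_lt_iff_ne_bot.2 hbot)
      fun i hi => hlt i (Finset.mem_of_mem_erase hi) (Finset.ne_of_mem_erase hi)
  rw [← Finset.add_sum_erase s f hi₀, hne _ _ hrest.ne', max_eq_left hrest.le]

theorem exists_ne_apply_eq_sup_of_sum_eq_zero {s : Finset ι} {f : ι → M}
    (hsum : ∑ i ∈ s, f i = 0) (hf : ∃ i ∈ s, f i ≠ 0) :
    ∃ i ∈ s, ∃ i' ∈ s, i ≠ i' ∧
      v (f i) = s.sup (fun i => v (f i)) ∧ v (f i') = s.sup (fun i => v (f i)) := by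
  classical
  obtain ⟨i₁, hi₁, hfi₁⟩ := hf
  obtain ⟨i₀, hi₀, hmax⟩ := s.exists_mem_eq_sup ⟨i₁, hi₁⟩ fun i => v (f i)
  suffices ∃ i ∈ s, i ≠ i₀ ∧ v (f i) = s.sup (fun i => v (f i)) by
    obtain ⟨i, hi, hii₀, hi_max⟩ := this
    exact ⟨i₀, hi₀, i, hi, hii₀.symm, hmax.symm, hi_max⟩
  by_contra! hunique
  have hlt : ∀ i ∈ s, i ≠ i₀ → v (f i) < v (f i₀) := fun i hi hii₀ =>
    hmax ▸ (Finset.le_sup (f := fun i => v (f i)) hi).lt_of_ne (hunique i hi hii₀)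
  have hbot : v (f i₀) = ⊥ := by
    rw [← apply_sum_eq_of_forall_lt v h0 hadd hne hi₀ hlt, hsum, h0]
  have hsingle : ∀ i ∈ s, i = i₀ := fun i hi =>
    by_contra fun hii₀ => not_lt_bot (hbot ▸ hlt i hi hii₀)
  rw [Finset.sum_eq_single_of_mem i₀ hi₀ fun i hi hii₀ => absurd (hsingle i hi) hii₀] at hsum
  exact hfi₁ (hsingle i₁ hi₁ ▸ hsum)

end Ultrametric

/-- Kapranov: if `z ∈ (K*)^n` is a root of `P(z) = Σ_{i ∈ s} a_i z^i` (with `P`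
not the zero polynomial), then the tropical maximum
`max_i (val a_i + ⟨Val z, i⟩)` is attained by at least two distinct
multi-indices, i.e. `Val z` lies in the tropical hypersurface of `Trop P`. -/
theorem stmt_7 {K : Type*} [Field K] {n : ℕ} (val : K → WithBot ℝ)
    (h0 : val 0 = ⊥)
    (hmul : ∀ a b : K, val (a * b) = val a + val b)
    (hadd : ∀ a b : K, val (a + b) ≤ max (val a) (val b))
    (hne : ∀ a b : K, val a ≠ val b → val (a + b) = max (val a) (val b))
    (s : Finset (Fin n → ℕ)) (a : (Fin n → ℕ) → K) (z : Fin n → K)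
    (hz : ∀ j, z j ≠ 0)
    (hnz : ∃ i ∈ s, a i ≠ 0)
    (hroot : ∑ i ∈ s, a i * ∏ j, z j ^ i j = 0) :
    ∃ i ∈ s, ∃ i' ∈ s, i ≠ i' ∧
      val (a i) + ∑ j, (i j) • val (z j) =
        s.sup (fun i => val (a i) + ∑ j, (i j) • val (z j)) ∧
      val (a i') + ∑ j, (i' j) • val (z j) =
        s.sup (fun i => val (a i) + ∑ j, (i j) • val (z j)) := by
  have hmonomial : ∀ i : Fin n → ℕ,
      val (a i * ∏ j, z j ^ i j) = val (a i) + ∑ j, i j • val (z j) :=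
    fun i => apply_mul_prod_pow val hmul _ z i (a i)
  have hmonomial_ne : ∃ i ∈ s, a i * ∏ j, z j ^ i j ≠ 0 := by
    obtain ⟨i, hi, hai⟩ := hnz
    exact ⟨i, hi, mul_ne_zero hai (Finset.prod_ne_zero_iff.2 fun j _ => pow_ne_zero _ (hz j))⟩
  simp only [← hmonomial]
  exact exists_ne_apply_eq_sup_of_sum_eq_zero val h0 hadd hne hroot hmonomial_ne
end

section
/- For l ≥ 0, the second derivative of the rational function f(z) = -z^l/(1+z) has exactly 2 roots (counted with multiplicity) in k* \ {-1} when l ≥ 3, and no such roots when l ≤ 2. -/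
/-!
For `l = m + 3` the numerator factors as `z^(m+1) · Q(z)` with
`Q = (m+2)(m+1) z² + 2(m+3)(m+1) z + (m+3)(m+2)`, a genuine quadratic in characteristic `0`
with `Q(0) = (m+3)(m+2) ≠ 0` and `Q(-1) = 2`; so the roots away from `0` and `-1` are exactly
the two roots of `Q`. For `l ≤ 2` the numerator is the constant `2 · (-1)^l`.
-/

open Polynomial

namespace Polynomial

theorem roots_X_pow_mul_filter {R : Type*} [CommRing R] [IsDomain R] {p : R → Prop}
    [DecidablePred p] (n : ℕ) {Q : R[X]} (hQ : Q ≠ 0) (h0 : ¬ p 0)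
    (hp : ∀ z, Q.IsRoot z → p z) :
    (X ^ n * Q).roots.filter p = Q.roots := by
  rw [roots_mul (mul_ne_zero (pow_ne_zero _ X_ne_zero) hQ), roots_X_pow, Multiset.filter_add,
    Multiset.nsmul_singleton, Multiset.filter_eq_nil.mpr, zero_add, Multiset.filter_eq_self]
  · exact fun z hz => hp z (isRoot_of_mem_roots hz)
  · exact fun z hz => Multiset.eq_of_mem_replicate hz ▸ h0

end Polynomial

section SecondDerivNumerator

variable {k : Type*} [Field k]

noncomputable def secondDerivNumerator (l : ℕ) : k[X] :=
  C ((l * (l - 1) : ℕ) : k) * X ^ (l - 2) * (1 + X) ^ 2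
    - C ((2 * l : ℕ) : k) * X ^ (l - 1) * (1 + X) + C 2 * X ^ l

theorem secondDerivNumerator_of_le_two {l : ℕ} (hl : l ≤ 2) :
    (secondDerivNumerator l : k[X]) = C (2 * (-1) ^ l) := by
  interval_cases l <;>
    simp only [secondDerivNumerator, map_natCast, map_ofNat, map_mul, map_pow, map_neg,
      map_one] <;>
    push_cast <;> ring

noncomputable def secondDerivNumeratorCofactor (m : ℕ) : k[X] :=
  C (((m + 2) * (m + 1) : ℕ) : k) * X ^ 2 + C ((2 * (m + 3) * (m + 1) : ℕ) : k) * X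
    + C (((m + 3) * (m + 2) : ℕ) : k)

theorem secondDerivNumerator_add_three (m : ℕ) :
    (secondDerivNumerator (m + 3) : k[X]) = X ^ (m + 1) * secondDerivNumeratorCofactor m := by
  rw [secondDerivNumerator, secondDerivNumeratorCofactor, show m + 3 - 1 = m + 2 by omega,
    show m + 3 - 2 = m + 1 by omega]
  simp only [map_natCast, map_ofNat]
  push_cast
  ring

theorem eval_neg_one_secondDerivNumeratorCofactor (m : ℕ) :
    (secondDerivNumeratorCofactor m : k[X]).eval (-1) = 2 := by
  simp only [secondDerivNumeratorCofactor, eval_add, eval_mul, eval_pow, eval_C, eval_X]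
  push_cast
  ring

variable [CharZero k]

theorem natDegree_secondDerivNumeratorCofactor (m : ℕ) :
    (secondDerivNumeratorCofactor m : k[X]).natDegree = 2 :=
  natDegree_quadratic (Nat.cast_ne_zero.mpr (by positivity))

theorem secondDerivNumeratorCofactor_ne_zero (m : ℕ) :
    (secondDerivNumeratorCofactor m : k[X]) ≠ 0 :=
  ne_zero_of_natDegree_gt (n := 0) ((natDegree_secondDerivNumeratorCofactor (k := k) m).symm ▸ two_pos)

theorem eval_zero_secondDerivNumeratorCofactor_ne_zero (m : ℕ) :
    (secondDerivNumeratorCofactor m : k[X]).eval 0 ≠ 0 := by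
  simp only [secondDerivNumeratorCofactor, eval_add, eval_mul, eval_pow, eval_C, eval_X]
  simpa using (Nat.cast_ne_zero (R := k)).mpr (show (m + 3) * (m + 2) ≠ 0 by positivity)

end SecondDerivNumerator

open Classical in
/-- The numerator of the second derivative of `f(z) = -z^l/(1+z)`, namely
`l(l-1)·z^{l-2}(1+z)² - 2l·z^{l-1}(1+z) + 2·z^l`, has exactly 2 roots counted
with multiplicity away from `z = 0` and `z = -1` when `l ≥ 3`, and no such
roots when `l ≤ 2`. -/
theorem stmt_13 {k : Type*} [Field k] [IsAlgClosed k] [CharZero k]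
    (l : ℕ) (N : Polynomial k)
    (hN : N = C ((l * (l - 1) : ℕ) : k) * X ^ (l - 2) * (1 + X) ^ 2
        - C ((2 * l : ℕ) : k) * X ^ (l - 1) * (1 + X) + C 2 * X ^ l) :
    Multiset.card (N.roots.filter fun z => z ≠ 0 ∧ z ≠ -1) =
      if 3 ≤ l then 2 else 0 := by
  obtain rfl : N = secondDerivNumerator l := hN
  split_ifs with hl
  · obtain ⟨m, rfl⟩ := Nat.exists_eq_add_of_le' hl
    rw [secondDerivNumerator_add_three, roots_X_pow_mul_filter _
      (secondDerivNumeratorCofactor_ne_zero m) (by simp), IsAlgClosed.card_roots_eq_natDegree,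
      natDegree_secondDerivNumeratorCofactor]
    intro z hz
    refine ⟨?_, ?_⟩ <;> rintro rfl
    · exact eval_zero_secondDerivNumeratorCofactor_ne_zero m hz
    · exact two_ne_zero ((eval_neg_one_secondDerivNumeratorCofactor m).symm.trans hz)
  · rw [secondDerivNumerator_of_le_two (by omega), roots_C, Multiset.filter_zero,
      Multiset.card_zero]
end
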